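/- Let $G$ be a countable discrete group and $\psi: G \to \mathbb{C}$ a finitely supported positive definite function with $\psi(e) = 1$. Then there exists a unit vector $\eta \in \ell_2(G)$ such that $\langle \eta, g\cdot \eta\rangle = \psi(g)$ for all $g \in G$, where $(g\cdot\eta)_h = \eta_{g^{-1}h}$. -/

import Mathlib

/-!
Convolution by `ψ`, `(T f) h = ∑ₛ ψ s * f (h * s)`, is a bounded operator on `ℓ²(G)` commuting with
every left translation, and positive definiteness of `ψ` says exactly that `⟪f, T f⟫ ≥ 0` for
finitely supported `f`, hence for all `f` by density. The positive square root `Q` of `T` still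
commutes with left translations, so `η = Q δₑ` satisfies `⟪η, g • η⟫ = ⟪δₑ, T δ_g⟫ = ψ g`; in
particular `‖η‖² = ψ 1 = 1`.
-/

open Function
open scoped ComplexConjugate ComplexOrder InnerProductSpace lp ENNReal

noncomputable section

theorem Memℓp.comp_equiv {α β E : Type*} [NormedAddCommGroup E] {p : ℝ≥0∞} {f : β → E}
    (hf : Memℓp f p) (e : α ≃ β) : Memℓp (f ∘ e) p := by
  rcases p.trichotomy with rfl | rfl | hp
  · exact memℓp_zero (hf.finite_dsupport.preimage e.injective.injOn)
  · refine memℓp_infty ?_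
    rw [show (fun a => ‖(f ∘ e) a‖) = (‖f ·‖) ∘ e from rfl, e.surjective.range_comp]
    exact hf.bddAbove
  · exact memℓp_gen (e.summable_iff.2 (hf.summable hp))

namespace lp

def compEquiv {α β 𝕜 E : Type*} [NormedField 𝕜] [NormedAddCommGroup E] [NormedSpace 𝕜 E]
    {p : ℝ≥0∞} [Fact (1 ≤ p)] (hp : p ≠ ∞) (e : α ≃ β) :
    lp (fun _ : β => E) p ≃ₗᵢ[𝕜] lp (fun _ : α => E) p where
  toFun f := ⟨f ∘ e, f.2.comp_equiv e⟩
  invFun f := ⟨f ∘ e.symm, f.2.comp_equiv e.symm⟩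
  map_add' _ _ := rfl
  map_smul' _ _ := rfl
  left_inv f := by ext; simp
  right_inv f := by ext; simp
  norm_map' f := by
    have hp' : 0 < p.toReal := ENNReal.toReal_pos (zero_lt_one.trans_le Fact.out).ne' hp
    simp only [LinearEquiv.coe_mk, norm_eq_tsum_rpow hp']
    congr 1
    exact e.tsum_eq fun b => ‖f b‖ ^ p.toReal

theorem tsum_norm_sq_eq_norm_sq {ι : Type*} {E : ι → Type*} [∀ i, NormedAddCommGroup (E i)]
    (f : lp E 2) : ∑' i, ‖f i‖ ^ 2 = ‖f‖ ^ 2 := by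
  simpa only [ENNReal.toReal_ofNat, Real.rpow_two] using (norm_rpow_eq_tsum (p := 2) two_pos f).symm

end lp

theorem ContinuousLinearMap.IsPositive.exists_sqrt_commute {H : Type*} [NormedAddCommGroup H]
    [InnerProductSpace ℂ H] [CompleteSpace H] {T : H →L[ℂ] H} (hT : T.IsPositive) :
    ∃ Q : H →L[ℂ] H, IsSelfAdjoint Q ∧ Q * Q = T ∧ ∀ A, Commute A T → Commute A Q :=
  ⟨CFC.sqrt T, .of_nonneg (CFC.sqrt_nonneg T),
    CFC.sqrt_mul_sqrt_self T ((nonneg_iff_isPositive T).2 hT),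
    fun _ hA => (hA.symm.cfcₙ_nnreal _).symm⟩

/-- In `ℂ`, `0 ≤ z` also says that `z` is real, so the symmetry of `T` comes for free. -/
theorem ContinuousLinearMap.isPositive_of_forall_inner_nonneg {E : Type*} [NormedAddCommGroup E]
    [InnerProductSpace ℂ E] {T : E →L[ℂ] E} (hT : ∀ x, 0 ≤ ⟪x, T x⟫_ℂ) : T.IsPositive := by
  refine (isPositive_iff_complex T).2 fun x => ?_
  have hx : 0 ≤ ⟪T x, x⟫_ℂ := by
    rw [← inner_conj_symm]
    exact star_nonneg_iff.2 (hT x)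
  exact ⟨(Complex.eq_re_of_ofReal_le (r := 0) (by rwa [Complex.ofReal_zero])).symm,
    (Complex.nonneg_iff.1 hx).1⟩

theorem IsSelfAdjoint.inner_apply_commute_apply {𝕜 E : Type*} [RCLike 𝕜] [NormedAddCommGroup E]
    [InnerProductSpace 𝕜 E] [CompleteSpace E] {Q U : E →L[𝕜] E} (hQ : IsSelfAdjoint Q)
    (hUQ : Commute U Q) (x : E) : ⟪Q x, U (Q x)⟫_𝕜 = ⟪x, (Q * Q) (U x)⟫_𝕜 :=
  (congrArg _ (DFunLike.congr_fun hUQ.eq x)).trans (hQ.isSymmetric _ _)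

section RegularRepresentation

variable {G : Type*} [Group G]

def IsPositiveDefinite (ψ : G → ℂ) : Prop :=
  ∀ (n : ℕ) (g : Fin n → G) (c : Fin n → ℂ), 0 ≤ ∑ i, ∑ j, c i * conj (c j) * ψ ((g j)⁻¹ * g i)

theorem IsPositiveDefinite.sum_finset_nonneg {ψ : G → ℂ} (hψ : IsPositiveDefinite ψ)
    (F : Finset G) (c : G → ℂ) : 0 ≤ ∑ x ∈ F, ∑ y ∈ F, c x * conj (c y) * ψ (y⁻¹ * x) := by
  let e := F.equivFin.symm
  convert hψ F.card (fun i => e i) (fun i => c (e i)) using 1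
  rw [← F.sum_coe_sort, ← e.sum_comp]
  refine Fintype.sum_congr _ _ fun i => ?_
  rw [← F.sum_coe_sort, ← e.sum_comp]

def leftTranslation (g : G) : ℓ²(G, ℂ) →L[ℂ] ℓ²(G, ℂ) :=
  (lp.compEquiv (𝕜 := ℂ) (E := ℂ) (p := 2) ENNReal.ofNat_ne_top
    (Equiv.mulLeft g⁻¹)).toContinuousLinearEquiv

def rightTranslation (s : G) : ℓ²(G, ℂ) →L[ℂ] ℓ²(G, ℂ) :=
  (lp.compEquiv (𝕜 := ℂ) (E := ℂ) (p := 2) ENNReal.ofNat_ne_top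
    (Equiv.mulRight s)).toContinuousLinearEquiv

@[simp] theorem leftTranslation_apply (g : G) (f : ℓ²(G, ℂ)) (h : G) :
    leftTranslation g f h = f (g⁻¹ * h) := rfl

@[simp] theorem rightTranslation_apply (s : G) (f : ℓ²(G, ℂ)) (h : G) :
    rightTranslation s f h = f (h * s) := rfl

theorem commute_leftTranslation_rightTranslation (g s : G) :
    Commute (leftTranslation g) (rightTranslation s) := by
  ext f h
  simp [mul_assoc]

theorem leftTranslation_single_one [DecidableEq G] (g : G) :
    leftTranslation g (lp.single 2 1 1) = lp.single 2 g (1 : ℂ) := by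
  ext h
  simp [lp.single_apply, Pi.single_apply, inv_mul_eq_one, eq_comm]

def convolutionOperator (ψ : G → ℂ) (hψ : (support ψ).Finite) : ℓ²(G, ℂ) →L[ℂ] ℓ²(G, ℂ) :=
  ∑ s ∈ hψ.toFinset, ψ s • rightTranslation s

variable {ψ : G → ℂ} (hψ : (support ψ).Finite)

theorem convolutionOperator_apply (f : ℓ²(G, ℂ)) (h : G) :
    convolutionOperator ψ hψ f h = ∑ s ∈ hψ.toFinset, ψ s * f (h * s) := by
  rw [convolutionOperator, sum_apply, lp.coeFn_sum, Finset.sum_apply]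
  simp [lp.coeFn_smul]

theorem commute_leftTranslation_convolutionOperator (g : G) :
    Commute (leftTranslation g) (convolutionOperator ψ hψ) :=
  Commute.sum_right _ _ _ fun s _ => (commute_leftTranslation_rightTranslation g s).smul_right _

theorem inner_single_convolutionOperator_single [DecidableEq G] (h k : G) (a b : ℂ) :
    ⟪lp.single 2 h a, convolutionOperator ψ hψ (lp.single 2 k b)⟫_ℂ =
      b * conj a * ψ (h⁻¹ * k) := by
  rw [lp.inner_single_left, convolutionOperator_apply, Finset.sum_eq_single (h⁻¹ * k)]
  · simp only [mul_inv_cancel_left, lp.single_apply, Pi.single_eq_same, RCLike.inner_apply]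
    ring
  · intro s _ hs
    have hsk : h * s ≠ k := by rintro rfl; simp at hs
    simp [lp.single_apply, hsk]
  · intro hs
    simp_all

theorem inner_sum_single_convolutionOperator_sum_single [DecidableEq G] (F : Finset G)
    (c : G → ℂ) :
    ⟪∑ i ∈ F, lp.single 2 i (c i), convolutionOperator ψ hψ (∑ i ∈ F, lp.single 2 i (c i))⟫_ℂ =
      ∑ x ∈ F, ∑ y ∈ F, c x * conj (c y) * ψ (y⁻¹ * x) := by
  simp only [map_sum, sum_inner, inner_sum, inner_single_convolutionOperator_single]

theorem isPositive_convolutionOperator (hpos : IsPositiveDefinite ψ) :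
    (convolutionOperator ψ hψ).IsPositive := by
  classical
  refine ContinuousLinearMap.isPositive_of_forall_inner_nonneg fun x => ?_
  have hcont : Continuous fun y => ⟪y, convolutionOperator ψ hψ y⟫_ℂ :=
    continuous_id.inner (convolutionOperator ψ hψ).continuous
  refine ge_of_tendsto' ((hcont.tendsto x).comp (lp.hasSum_single ENNReal.ofNat_ne_top x))
    fun F => ?_
  rw [comp_apply, inner_sum_single_convolutionOperator_sum_single]
  exact hpos.sum_finset_nonneg F x

end RegularRepresentation

theorem pos_def_finitely_supported_is_matrix_coefficient_general {G : Type*} [Group G]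
    (ψ : G → ℂ) (hfin : (Function.support ψ).Finite)
    (hpd : ∀ (n : ℕ) (g : Fin n → G) (c : Fin n → ℂ),
      0 ≤ (∑ i, ∑ j, c i * conj (c j) * ψ ((g j)⁻¹ * g i)).re ∧
        (∑ i, ∑ j, c i * conj (c j) * ψ ((g j)⁻¹ * g i)).im = 0)
    (hone : ψ 1 = 1) :
    ∃ η : G → ℂ, Memℓp η 2 ∧ (∑' g : G, ‖η g‖^2 = 1) ∧
      ∀ g : G, ∑' h : G, conj (η h) * η (g⁻¹ * h) = ψ g := by
  classical
  have hψ : IsPositiveDefinite ψ := fun n g c =>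
    Complex.nonneg_iff.2 ⟨(hpd n g c).1, (hpd n g c).2.symm⟩
  obtain ⟨Q, hQ, hQQ, hcomm⟩ := (isPositive_convolutionOperator hfin hψ).exists_sqrt_commute
  set η := Q (lp.single 2 1 1)
  have hcoeff (g : G) : ⟪η, leftTranslation g η⟫_ℂ = ψ g := by
    rw [hQ.inner_apply_commute_apply (hcomm _ (commute_leftTranslation_convolutionOperator hfin g)),
      hQQ, leftTranslation_single_one, inner_single_convolutionOperator_single]
    simp
  refine ⟨η, lp.memℓp η, ?_, fun g => ?_⟩
  · have hself : leftTranslation 1 η = η := by ext; simp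
    rw [lp.tsum_norm_sq_eq_norm_sq, @norm_sq_eq_re_inner ℂ]
    simpa [hself, hone] using congrArg Complex.re (hcoeff 1)
  · rw [← hcoeff g, lp.inner_eq_tsum]
    simp [RCLike.inner_apply, mul_comm]

/-- A finitely supported positive definite function `ψ` on a countable discrete group
with `ψ(e) = 1` is the diagonal matrix coefficient of the left regular representation:
there is a unit vector `η ∈ ℓ²(G)` with `⟨η, g⋅η⟩ = ψ(g)` for all `g`. -/
theorem pos_def_finitely_supported_is_matrix_coefficient {G : Type*} [Group G] [Countable G]
    (ψ : G → ℂ) (hfin : (Function.support ψ).Finite)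
    (hpd : ∀ (n : ℕ) (g : Fin n → G) (c : Fin n → ℂ),
      0 ≤ (∑ i, ∑ j, c i * conj (c j) * ψ ((g j)⁻¹ * g i)).re ∧
        (∑ i, ∑ j, c i * conj (c j) * ψ ((g j)⁻¹ * g i)).im = 0)
    (hone : ψ 1 = 1) :
    ∃ η : G → ℂ, Memℓp η 2 ∧ (∑' g : G, ‖η g‖^2 = 1) ∧
      ∀ g : G, ∑' h : G, conj (η h) * η (g⁻¹ * h) = ψ g :=
  pos_def_finitely_supported_is_matrix_coefficient_general ψ hfin hpd hone
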